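/- arXiv:2009.04882 — 2 statements merged into one kernel-verified Lean document; each statement's English description precedes it below -/
import Mathlib

section
/- Let Z_1,...,Z_m be fixed values in {0,1} with sum Z_blk, and let a uniformly random subset of size k be drawn without replacement for parameter estimation with sample mean Z̄_pe, leaving n = m - k values with mean Z̄_key. Then for any ξ > 0, the probability that Z̄_blk ≥ Z̄_pe + ξ (i.e., the population mean exceeds the sample mean by ξ) is at most exp(-2 m k ξ² / (n+1)). -/
/-!
Serfling's martingale argument. For a sample `s` of the `N` points, let `D s` be the mean of `z`
over the unsampled points minus the population mean. Draw the sample one point at a time: given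
the first `j` points, the next one is uniform among the `N - j` others, and `D` moves by a centred
amount ranging over an interval of length `1 / (N - j - 1)`. Hoeffding's lemma bounds each
conditional moment generating function by `exp (t² / (8 (N - j - 1)²))`, so after `k` draws,
with `n = N - k`,
`E exp (t D) ≤ exp (t² / 8 ∑_{n ≤ i < N} i⁻²) ≤ exp (t² k (n + 1) / (8 N n²))`.
The event of the theorem is `D ≥ k ξ / n`, and the Chernoff bound with `t = 4 N n ξ / (n + 1)`
gives `exp (-2 N k ξ² / (n + 1))`.
-/

open Finset Classical Real ProbabilityTheory MeasureTheory

theorem sum_exp_mul_sub_average_le {ι : Type*} (s : Finset ι) (f : ι → ℝ) {a b : ℝ}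
    (hf : ∀ i ∈ s, f i ∈ Set.Icc a b) (t : ℝ) :
    ∑ i ∈ s, exp (t * (f i - (∑ j ∈ s, f j) / #s)) ≤
      #s * exp ((b - a) ^ 2 * t ^ 2 / 8) := by
  obtain rfl | hs := s.eq_empty_or_nonempty
  · simp
  let _ : MeasurableSpace s := ⊤
  have : Nonempty s := hs.to_subtype
  let μ := (PMF.uniformOfFintype s).toMeasure
  have integral_eq (g : s → ℝ) : μ[g] = (∑ i, g i) / #s := by
    simp [μ, PMF.integral_eq_sum, mul_sum, div_eq_inv_mul]
  have hoeffding := (hasSubgaussianMGF_of_mem_Icc (μ := μ) (X := fun i : s ↦ f i)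
    (measurable_of_finite _).aemeasurable (ae_of_all _ fun i ↦ hf i i.2)).mgf_le t
  rw [mgf, integral_eq, integral_eq, div_le_iff₀ (by positivity), sum_coe_sort s f,
    sum_coe_sort s (fun i ↦ exp (t * (f i - _)))] at hoeffding
  refine hoeffding.trans_eq ?_
  rw [mul_comm]
  congr 2
  simp only [NNReal.coe_pow, NNReal.coe_div, coe_nnnorm, norm_eq_abs, NNReal.coe_ofNat, div_pow,
    sq_abs]
  ring

theorem sum_Ico_inv_sq_le (n k : ℕ) (hn : 0 < n) :
    ∑ i ∈ Ico n (n + k), ((i : ℝ) ^ 2)⁻¹ ≤ k * (n + 1) / ((n + k) * n ^ 2) := by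
  induction k with
  | zero => simp
  | succ k ih =>
    rw [← add_assoc, sum_Ico_succ_top (by omega)]
    have hk : (0 : ℝ) ≤ k := k.cast_nonneg
    calc _ ≤ k * (n + 1) / ((n + k) * n ^ 2) + ((n + k : ℝ) ^ 2)⁻¹ := by push_cast; gcongr
      _ ≤ (↑(k + 1) : ℝ) * (n + 1) / ((n + ↑(k + 1)) * n ^ 2) := by
        push_cast
        rw [← one_div, div_add_div _ _ (by positivity) (by positivity),
          div_le_div_iff₀ (by positivity) (by positivity)]
        -- after clearing denominators, the two sides differ by exactly `n³ (n + k) k`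
        linarith [mul_nonneg (mul_nonneg (pow_nonneg n.cast_nonneg 3) hk)
          (by positivity : (0 : ℝ) ≤ n + k)]

theorem card_filter_le_exp_mul_sum {α : Type*} (S : Finset α) (f : α → ℝ) (a : ℝ) {t : ℝ}
    (ht : 0 ≤ t) :
    (#{s ∈ S | a ≤ f s} : ℝ) ≤ exp (-(t * a)) * ∑ s ∈ S, exp (t * f s) := by
  rw [mul_sum, card_eq_sum_ones, Nat.cast_sum, Nat.cast_one]
  calc ∑ s ∈ S with a ≤ f s, (1 : ℝ)
      ≤ ∑ s ∈ S with a ≤ f s, exp (-(t * a)) * exp (t * f s) := by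
        refine sum_le_sum fun s hs ↦ ?_
        rw [← exp_add, one_le_exp_iff]
        nlinarith [(mem_filter.1 hs).2]
    _ ≤ ∑ s ∈ S, exp (-(t * a)) * exp (t * f s) :=
        sum_le_sum_of_subset_of_nonneg (filter_subset _ _) fun _ _ _ ↦ by positivity

theorem sum_powersetCard_sum_compl_insert {α M : Type*} [Fintype α] [DecidableEq α]
    [AddCommMonoid M] (j : ℕ) (g : Finset α → M) :
    ∑ s ∈ powersetCard j univ, ∑ i ∈ sᶜ, g (insert i s) =
      (j + 1) • ∑ t ∈ powersetCard (j + 1) univ, g t := by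
  have : ∀ t ∈ powersetCard (j + 1) (univ : Finset α), (j + 1) • g t = ∑ _i ∈ t, g t :=
    fun t ht ↦ by rw [sum_const, mem_powersetCard_univ.1 ht]
  rw [smul_sum, sum_congr rfl this, sum_sigma', sum_sigma']
  refine sum_nbij' (fun p ↦ ⟨insert p.2 p.1, p.2⟩) (fun p ↦ ⟨p.1.erase p.2, p.2⟩)
    ?_ ?_ ?_ ?_ ?_ <;> rintro ⟨s, i⟩ h <;> simp_all

section Serfling

variable {ι : Type*} [Fintype ι] (z : ι → ℝ)

/-- The mean of `z` over the unsampled points `sᶜ` minus the mean over all of `ι`. -/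
noncomputable def serflingDeviation (s : Finset ι) : ℝ :=
  (#s * (∑ i, z i) / Fintype.card ι - ∑ i ∈ s, z i) / (Fintype.card ι - #s)

theorem serflingDeviation_insert [DecidableEq ι] {s : Finset ι} {i : ι} (hi : i ∉ s)
    (hs : #s + 1 < Fintype.card ι) :
    serflingDeviation z (insert i s) =
      serflingDeviation z s - (z i - (∑ j ∈ sᶜ, z j) / #sᶜ) / (#sᶜ - 1) := by
  have htotal := sum_add_sum_compl s z
  have hN : (#s : ℝ) + 1 < Fintype.card ι := by exact_mod_cast hs
  have h0 : (Fintype.card ι : ℝ) ≠ 0 := by linarith [(#s).cast_nonneg (α := ℝ)]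
  have h1 : (Fintype.card ι : ℝ) - #s ≠ 0 := by linarith
  have h2 : (Fintype.card ι : ℝ) - #s - 1 ≠ 0 := by linarith
  have h3 : (Fintype.card ι : ℝ) - (#s + 1) ≠ 0 := by linarith
  rw [card_compl, Nat.cast_sub (by omega : #s ≤ Fintype.card ι)]
  simp only [serflingDeviation, card_insert_of_notMem hi, sum_insert hi, Nat.cast_add,
    Nat.cast_one]
  field_simp
  rw [← htotal]
  ring

theorem sum_compl_exp_serflingDeviation_insert_le [DecidableEq ι] (hz : ∀ i, z i ∈ Set.Icc 0 1)
    {s : Finset ι} (hs : #s + 1 < Fintype.card ι) (t : ℝ) :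
    ∑ i ∈ sᶜ, exp (t * serflingDeviation z (insert i s)) ≤
      #sᶜ * exp (t ^ 2 / (8 * (#sᶜ - 1) ^ 2)) * exp (t * serflingDeviation z s) := by
  have hc : (1 : ℝ) < #sᶜ := by
    rw [card_compl]
    exact_mod_cast (by omega : 1 < Fintype.card ι - #s)
  calc ∑ i ∈ sᶜ, exp (t * serflingDeviation z (insert i s))
      = exp (t * serflingDeviation z s) *
          ∑ i ∈ sᶜ, exp (-t / (#sᶜ - 1) * (z i - (∑ j ∈ sᶜ, z j) / #sᶜ)) := by
        rw [mul_sum]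
        refine sum_congr rfl fun i hi ↦ ?_
        rw [serflingDeviation_insert z (mem_compl.1 hi) hs, ← exp_add]
        congr 1
        field_simp
        ring
    _ ≤ exp (t * serflingDeviation z s) * (#sᶜ * exp (t ^ 2 / (8 * (#sᶜ - 1) ^ 2))) := by
        gcongr
        refine (sum_exp_mul_sub_average_le sᶜ z (fun i _ ↦ hz i) _).trans_eq ?_
        field_simp
        rw [sub_zero, one_pow, one_mul]
    _ = _ := by ring

noncomputable def serflingMGF (t : ℝ) (j : ℕ) : ℝ :=
  (∑ s ∈ powersetCard j univ, exp (t * serflingDeviation z s)) / (Fintype.card ι).choose j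

theorem serflingMGF_succ_le (hz : ∀ i, z i ∈ Set.Icc 0 1) {j : ℕ}
    (hj : j + 1 < Fintype.card ι) (t : ℝ) :
    serflingMGF z t (j + 1) ≤
      exp (t ^ 2 / (8 * (Fintype.card ι - j - 1) ^ 2)) * serflingMGF z t j := by
  set N := Fintype.card ι
  set E := exp (t ^ 2 / (8 * (N - j - 1) ^ 2))
  have hcard : ∀ s ∈ powersetCard j (univ : Finset ι), (#sᶜ : ℝ) = N - j := fun s hs ↦ by
    rw [card_compl, mem_powersetCard_univ.1 hs, Nat.cast_sub (by omega)]
  have hsum : (j + 1) * ∑ u ∈ powersetCard (j + 1) univ, exp (t * serflingDeviation z u) ≤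
      (N - j) * E * ∑ s ∈ powersetCard j univ, exp (t * serflingDeviation z s) := by
    rw [← Nat.cast_succ, ← nsmul_eq_mul, ← sum_powersetCard_sum_compl_insert, mul_sum]
    refine sum_le_sum fun s hs ↦ ?_
    have := sum_compl_exp_serflingDeviation_insert_le z hz
      (by rwa [mem_powersetCard_univ.1 hs] : #s + 1 < N) t
    rwa [hcard s hs] at this
  have hchoose : (N - j : ℝ) * N.choose j = (j + 1) * N.choose (j + 1) := by
    rw [← Nat.cast_sub (by omega : j ≤ N), ← Nat.cast_succ]
    exact_mod_cast by rw [mul_comm, ← Nat.choose_succ_right_eq, mul_comm]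
  have hC : (0 : ℝ) < N.choose j := by exact_mod_cast Nat.choose_pos (by omega)
  have hNj : (0 : ℝ) < N - j := by rw [sub_pos]; exact_mod_cast (by omega : j < N)
  unfold serflingMGF
  calc (∑ u ∈ powersetCard (j + 1) univ, exp (t * serflingDeviation z u)) / N.choose (j + 1)
      = (j + 1) * (∑ u ∈ powersetCard (j + 1) univ, exp (t * serflingDeviation z u)) /
          ((N - j) * N.choose j) := by
        rw [hchoose, mul_div_mul_left _ _ (by positivity)]
    _ ≤ (N - j) * E * (∑ s ∈ powersetCard j univ, exp (t * serflingDeviation z s)) /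
          ((N - j) * N.choose j) := by gcongr
    _ = E * ((∑ s ∈ powersetCard j univ, exp (t * serflingDeviation z s)) / N.choose j) := by
        field_simp

theorem serflingMGF_le (hz : ∀ i, z i ∈ Set.Icc 0 1) {k : ℕ} (hk : k < Fintype.card ι)
    (t : ℝ) :
    serflingMGF z t k ≤ exp (t ^ 2 / 8 *
      ∑ i ∈ Ico (Fintype.card ι - k) (Fintype.card ι), ((i : ℝ) ^ 2)⁻¹) := by
  induction k with
  | zero => simp [serflingMGF, serflingDeviation]
  | succ k ih =>
    set N := Fintype.card ι
    calc serflingMGF z t (k + 1)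
        ≤ exp (t ^ 2 / (8 * (N - k - 1) ^ 2)) * serflingMGF z t k :=
          serflingMGF_succ_le z hz hk t
      _ ≤ exp (t ^ 2 / (8 * (N - k - 1) ^ 2)) *
            exp (t ^ 2 / 8 * ∑ i ∈ Ico (N - k) N, ((i : ℝ) ^ 2)⁻¹) := by
          gcongr
          exact ih (by omega)
      _ = exp (t ^ 2 / 8 * ∑ i ∈ Ico (N - (k + 1)) N, ((i : ℝ) ^ 2)⁻¹) := by
          rw [← exp_add, sum_eq_sum_Ico_succ_bot (by omega : N - (k + 1) < N),
            show N - (k + 1) + 1 = N - k by omega, Nat.cast_sub hk.le]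
          push_cast
          congr 1
          field_simp
          ring

theorem le_serflingDeviation_of_sum_div_add_le {s : Finset ι} (hs : #s < Fintype.card ι)
    {ξ : ℝ} (h : (∑ i ∈ s, z i) / #s + ξ ≤ (∑ i, z i) / Fintype.card ι) :
    #s * ξ / (Fintype.card ι - #s) ≤ serflingDeviation z s := by
  have hpos : (0 : ℝ) < Fintype.card ι - #s := by rw [sub_pos]; exact_mod_cast hs
  unfold serflingDeviation
  gcongr
  obtain rfl | hne := s.eq_empty_or_nonempty
  · simp
  have := mul_le_mul_of_nonneg_left h (#s).cast_nonneg
  rw [mul_add, mul_div_cancel₀ _ (by simpa using hne.ne_empty)] at this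
  rw [mul_div_assoc]
  linarith

theorem serfling_lower_tail_of_lt_card (hz : ∀ i, z i ∈ Set.Icc 0 1) {k : ℕ}
    (hk : k < Fintype.card ι) {ξ : ℝ} (hξ : 0 ≤ ξ) :
    (#{s ∈ powersetCard k univ | (∑ i ∈ s, z i) / k + ξ ≤ (∑ i, z i) / Fintype.card ι} : ℝ) /
        (Fintype.card ι).choose k ≤
      exp (-(2 * Fintype.card ι * k * ξ ^ 2) / ((Fintype.card ι - k : ℕ) + 1)) := by
  set N := Fintype.card ι
  set n := N - k
  have hn : (n : ℝ) = N - k := Nat.cast_sub hk.le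
  have hn0 : (n : ℝ) ≠ 0 := by exact_mod_cast (Nat.sub_pos_of_lt hk).ne'
  -- the minimiser of the Chernoff exponent below
  set t := 4 * N * n * ξ / (n + 1)
  calc _ ≤ (#{s ∈ powersetCard k univ | k * ξ / n ≤ serflingDeviation z s} : ℝ) /
        N.choose k := by
        refine div_le_div_of_nonneg_right (Nat.cast_le.2 (card_le_card fun s hs ↦ ?_))
          (by positivity)
        rw [mem_filter] at hs ⊢
        have hsk := mem_powersetCard_univ.1 hs.1
        refine ⟨hs.1, ?_⟩
        have := le_serflingDeviation_of_sum_div_add_le z (hsk ▸ hk) (hsk ▸ hs.2)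
        rwa [hsk, ← hn] at this
    _ ≤ exp (-(t * (k * ξ / n))) * serflingMGF z t k := by
        rw [serflingMGF, mul_div_assoc']
        gcongr
        exact card_filter_le_exp_mul_sum _ _ _ (by positivity)
    _ ≤ exp (-(t * (k * ξ / n))) * exp (t ^ 2 / 8 * (k * (n + 1) / ((n + k) * n ^ 2))) := by
        gcongr
        refine (serflingMGF_le z hz hk t).trans ?_
        gcongr
        have := sum_Ico_inv_sq_le n k (Nat.sub_pos_of_lt hk)
        rwa [show n + k = N by omega] at this
    _ = _ := by
        have hN : (N : ℝ) = n + k := by rw [hn]; ring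
        rw [← exp_add]
        congr 1
        simp only [t, hN]
        field_simp
        ring

end Serfling

theorem serfling_lower_tail_general (m k : ℕ) (hkm : k ≤ m)
    (z : Fin m → ℝ) (hz : ∀ i, z i = 0 ∨ z i = 1) (ξ : ℝ) (hξ : 0 < ξ) :
    (((Finset.univ.powersetCard k : Finset (Finset (Fin m))).filter
        (fun s => (∑ i ∈ s, z i) / k + ξ ≤ (∑ i, z i) / m)).card : ℝ) /
      ((Finset.univ.powersetCard k : Finset (Finset (Fin m))).card : ℝ)
      ≤ Real.exp (-(2 * m * k * ξ ^ 2) / ((m - k : ℕ) + 1)) := by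
  obtain rfl | hk := hkm.eq_or_lt
  · have : powersetCard k (univ : Finset (Fin k)) = {univ} := by
      simpa using powersetCard_self (univ : Finset (Fin k))
    simp [this, filter_singleton, hξ.not_ge]
    positivity
  · have hz01 (i : Fin m) : z i ∈ Set.Icc 0 1 := by rcases hz i with h | h <;> simp [h]
    simpa using serfling_lower_tail_of_lt_card z hz01 (by simpa using hk) hξ.le

/-- Serfling's lower-tail bound: the probability (under uniform sampling of a
`k`-subset without replacement from `m` binary values) that the population mean
exceeds the sample mean by `ξ` is at most `exp(-2 m k ξ² / (n+1))`, `n = m - k`. -/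
theorem serfling_lower_tail (m k : ℕ) (hk : 0 < k) (hkm : k ≤ m)
    (z : Fin m → ℝ) (hz : ∀ i, z i = 0 ∨ z i = 1) (ξ : ℝ) (hξ : 0 < ξ) :
    (((Finset.univ.powersetCard k : Finset (Finset (Fin m))).filter
        (fun s => (∑ i ∈ s, z i) / k + ξ ≤ (∑ i, z i) / m)).card : ℝ) /
      ((Finset.univ.powersetCard k : Finset (Finset (Fin m))).card : ℝ)
      ≤ Real.exp (-(2 * m * k * ξ ^ 2) / ((m - k : ℕ) + 1)) :=
  serfling_lower_tail_general m k hkm z hz ξ hξ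
end

section
/- Serfling bound in upper-tail form: let a population of m binary values have mean μ, and draw k of them uniformly without replacement with sample mean X̄_k; then for λ > 0, Pr[X̄_k - μ ≥ λ] ≤ exp(-2 k λ² / (1 - (k-1)/m)), and in particular Pr[X̄_k - μ ≥ λ] ≤ exp(-2 m k λ²/(m - k + 1)). -/
open Finset Classical

/-!
Serfling's martingale argument. If `D(T) = ∑_{i ∈ T} z i - #T μ` for a `j`-subset `T`, then
adding a uniformly random unsampled element `i ∉ T` changes `D` by `z i - μ`, whose conditional
mean is `-D(T) / (m - j)`. Hoeffding's lemma on the unsampled part therefore gives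
`E exp(u D_{j+1}) ≤ exp(u²/8) E exp(u (m-j-1)/(m-j) D_j)`; iterating with the rescaled parameter
`t / (m - j)` yields `E exp(t D_k / (m-k)) ≤ exp(t²/8 ∑_{i<k} (m-1-i)⁻²)`, and the variance sum
is at most `k (m-k+1) / (m (m-k)²)` by telescoping. A Chernoff bound with the optimal parameter
finishes.
-/

open Real ProbabilityTheory MeasureTheory

theorem Finset.sum_exp_mul_le_of_mem_Icc {ι : Type*} [Fintype ι] {s : Finset ι}
    (hs : s.Nonempty) {x : ι → ℝ} {a b : ℝ} (hx : ∀ i ∈ s, x i ∈ Set.Icc a b) (t : ℝ) :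
    ∑ i ∈ s, exp (t * x i) ≤ #s * exp (t * ((∑ i ∈ s, x i) / #s) + (b - a) ^ 2 * t ^ 2 / 8) := by
  let _ : MeasurableSpace ι := ⊤
  let μ := (PMF.uniformOfFinset s hs).toMeasure
  have h_integral (f : ι → ℝ) : ∫ i, f i ∂μ = (∑ i ∈ s, f i) / #s := by
    simp [μ, PMF.integral_eq_sum, PMF.uniformOfFinset_apply, apply_ite ENNReal.toReal, ite_mul,
      Finset.sum_ite_mem, Finset.mul_sum, div_eq_inv_mul]
  have h_Icc : ∀ᵐ i ∂μ, x i ∈ Set.Icc a b := by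
    rw [ae_iff, PMF.toMeasure_apply_eq_zero_iff _ (MeasurableSet.of_discrete),
      PMF.support_uniformOfFinset, Set.disjoint_left]
    exact fun i hi hxi => hxi (hx i hi)
  have hoeffding := (hasSubgaussianMGF_of_mem_Icc (by fun_prop) h_Icc).mgf_le t
  have h_param : ((‖b - a‖₊ / 2) ^ 2 : NNReal) * t ^ 2 / 2 = (b - a) ^ 2 * t ^ 2 / 8 := by
    push_cast [coe_nnnorm, Real.norm_eq_abs, div_pow, sq_abs]
    ring
  rw [mgf, h_integral, h_integral, h_param, div_le_iff₀ (by simpa using hs.card_pos)]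
    at hoeffding
  set mean := (∑ i ∈ s, x i) / #s
  calc ∑ i ∈ s, exp (t * x i) = exp (t * mean) * ∑ i ∈ s, exp (t * (x i - mean)) := by
        rw [Finset.mul_sum]
        exact Finset.sum_congr rfl fun i _ => by rw [← exp_add]; ring_nf
    _ ≤ exp (t * mean) * (exp ((b - a) ^ 2 * t ^ 2 / 8) * #s) := by gcongr
    _ = #s * exp (t * mean + (b - a) ^ 2 * t ^ 2 / 8) := by rw [exp_add]; ring

theorem Finset.succ_nsmul_sum_powersetCard_succ {α M : Type*} [Fintype α] [DecidableEq α]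
    [AddCommMonoid M] (j : ℕ) (g : Finset α → M) :
    (j + 1) • ∑ U ∈ powersetCard (j + 1) (univ : Finset α), g U
      = ∑ T ∈ powersetCard j (univ : Finset α), ∑ i ∈ Tᶜ, g (insert i T) := by
  have h_count : ∀ U ∈ powersetCard (j + 1) (univ : Finset α), (j + 1) • g U = ∑ _i ∈ U, g U :=
    fun U hU => by rw [sum_const, (mem_powersetCard_univ.1 hU)]
  rw [smul_sum, sum_congr rfl h_count, sum_sigma', sum_sigma']
  refine sum_bij' (fun p _ => ⟨p.1.erase p.2, p.2⟩) (fun p _ => ⟨insert p.2 p.1, p.2⟩)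
    ?_ ?_ ?_ ?_ ?_
  all_goals rintro ⟨T, i⟩ h
  all_goals simp only [mem_sigma, mem_powersetCard_univ, mem_compl] at h ⊢
  · simp [card_erase_of_mem h.2, h.1]
  · simp [card_insert_of_notMem h.2, h.1]
  · simp [insert_erase h.2]
  · simp [erase_insert h.2]
  · rw [insert_erase h.2]

theorem Finset.card_filter_le_exp_mul_sum_exp {α : Type*} (s : Finset α) (f : α → ℝ) (c : ℝ)
    {τ : ℝ} (hτ : 0 ≤ τ) :
    (#{x ∈ s | c ≤ f x} : ℝ) ≤ exp (-(τ * c)) * ∑ x ∈ s, exp (τ * f x) := by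
  calc (#{x ∈ s | c ≤ f x} : ℝ) = exp (-(τ * c)) * ∑ x ∈ s with c ≤ f x, exp (τ * c) := by
        rw [sum_const, nsmul_eq_mul, mul_left_comm, ← exp_add, neg_add_cancel, exp_zero, mul_one]
    _ ≤ exp (-(τ * c)) * ∑ x ∈ s with c ≤ f x, exp (τ * f x) := by
        gcongr with x hx
        exact (mem_filter.1 hx).2
    _ ≤ exp (-(τ * c)) * ∑ x ∈ s, exp (τ * f x) := by
        gcongr
        exact filter_subset _ _

theorem sq_div_sq_le_mul_sub_inv {a b : ℝ} (ha : 0 < a) (hab : a ≤ b) :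
    a ^ 2 / b ^ 2 ≤ a * (a + 1) * (1 / b - 1 / (b + 1)) := by
  have hb : 0 < b := ha.trans_le hab
  rw [div_sub_div _ _ hb.ne' (by positivity), div_le_iff₀ (by positivity)]
  field_simp
  nlinarith [mul_nonneg (mul_nonneg ha.le hb.le) (sub_nonneg.2 hab)]

theorem sq_mul_sum_inv_sq_le {m k : ℕ} (hkm : k < m) :
    ((m : ℝ) - k) ^ 2 * ∑ i ∈ range k, 1 / ((m : ℝ) - (i + 1)) ^ 2
      ≤ k * ((m : ℝ) - k + 1) / m := by
  have hmk : (0 : ℝ) < m - k := by rw [sub_pos]; exact_mod_cast hkm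
  have hm : (0 : ℝ) < m := by linarith [k.cast_nonneg (α := ℝ)]
  calc ((m : ℝ) - k) ^ 2 * ∑ i ∈ range k, 1 / ((m : ℝ) - (i + 1)) ^ 2
      ≤ ∑ i ∈ range k, ((m : ℝ) - k) * (m - k + 1) * (1 / ((m : ℝ) - (i + 1)) - 1 / (m - i)) := by
        rw [mul_sum]
        refine sum_le_sum fun i hi => ?_
        have hik : (i : ℝ) + 1 ≤ k := by exact_mod_cast mem_range.1 hi
        rw [mul_one_div, show (m : ℝ) - i = m - (i + 1) + 1 by ring]
        exact sq_div_sq_le_mul_sub_inv hmk (by linarith)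
    _ = ((m : ℝ) - k) * (m - k + 1) * (1 / (m - k) - 1 / m) := by
        rw [← mul_sum]
        congr 1
        simpa using sum_range_sub (fun i : ℕ => 1 / ((m : ℝ) - i)) k
    _ = k * ((m : ℝ) - k + 1) / m := by field_simp; ring

namespace Serfling

variable {m : ℕ} (z : Fin m → ℝ)

/-- For `#T = k` this is `k (X̄_T - μ)`. -/
noncomputable def deviation (T : Finset (Fin m)) : ℝ := ∑ i ∈ T, z i - #T * ((∑ i, z i) / m)

theorem deviation_insert {T : Finset (Fin m)} {i : Fin m} (hi : i ∉ T) :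
    deviation z (insert i T) = deviation z T + (z i - (∑ i, z i) / m) := by
  simp only [deviation, sum_insert hi, card_insert_of_notMem hi]
  push_cast
  ring

theorem deviation_univ : deviation z univ = 0 := by
  rcases Nat.eq_zero_or_pos m with rfl | hm
  · simp [deviation]
  · simp only [deviation, card_univ, Fintype.card_fin]
    field_simp
    ring

variable {z}

theorem sum_compl_exp_deviation_insert_le (hz : ∀ i, z i ∈ Set.Icc 0 1) {T : Finset (Fin m)}
    (hT : #T < m) (u : ℝ) :
    ∑ i ∈ Tᶜ, exp (u * deviation z (insert i T))
      ≤ (m - #T) * exp (u ^ 2 / 8) * exp (u * (m - #T - 1) / (m - #T) * deviation z T) := by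
  have h_card : (#Tᶜ : ℝ) = m - #T := by
    rw [card_compl, Fintype.card_fin, Nat.cast_sub hT.le]
  have h_pos : (0 : ℝ) < m - #T := by rw [sub_pos]; exact_mod_cast hT
  have h_sum : ∑ i ∈ Tᶜ, z i = ∑ i, z i - ∑ i ∈ T, z i := by
    rw [← sum_compl_add_sum T, add_sub_cancel_right]
  have h_nonempty : Tᶜ.Nonempty := card_pos.1 (by rw [card_compl]; simpa using hT)
  set μ := (∑ i, z i) / m
  have hoeffding : ∑ i ∈ Tᶜ, exp (u * z i)
      ≤ #Tᶜ * exp (u * ((∑ i ∈ Tᶜ, z i) / #Tᶜ) + u ^ 2 / 8) := by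
    simpa using sum_exp_mul_le_of_mem_Icc h_nonempty (fun i _ => hz i) u
  calc ∑ i ∈ Tᶜ, exp (u * deviation z (insert i T))
      = exp (u * (deviation z T - μ)) * ∑ i ∈ Tᶜ, exp (u * z i) := by
        rw [mul_sum]
        refine sum_congr rfl fun i hi => ?_
        rw [deviation_insert z (mem_compl.1 hi), ← exp_add]
        congr 1
        ring
    _ ≤ exp (u * (deviation z T - μ)) * (#Tᶜ * exp (u * ((∑ i ∈ Tᶜ, z i) / #Tᶜ) + u ^ 2 / 8)) := by
        gcongr
    _ = (m - #T) * exp (u ^ 2 / 8) * exp (u * (m - #T - 1) / (m - #T) * deviation z T) := by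
        rw [h_card, h_sum, mul_left_comm, ← exp_add, mul_assoc, ← exp_add]
        congr 2
        have hm : (m : ℝ) ≠ 0 := (h_pos.trans_le (sub_le_self _ (#T).cast_nonneg)).ne'
        simp only [deviation, μ]
        field_simp
        ring

theorem succ_mul_sum_exp_deviation_le (hz : ∀ i, z i ∈ Set.Icc 0 1) {j : ℕ} (hj : j < m)
    (u : ℝ) :
    (j + 1) * ∑ T ∈ powersetCard (j + 1) univ, exp (u * deviation z T)
      ≤ (m - j) * exp (u ^ 2 / 8) *
          ∑ T ∈ powersetCard j univ, exp (u * (m - j - 1) / (m - j) * deviation z T) := by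
  rw [← Nat.cast_succ, ← nsmul_eq_mul, succ_nsmul_sum_powersetCard_succ, mul_sum]
  refine sum_le_sum fun T hT => ?_
  rw [mem_powersetCard_univ] at hT
  subst hT
  exact sum_compl_exp_deviation_insert_le hz hj u

theorem sum_exp_div_mul_deviation_le (hz : ∀ i, z i ∈ Set.Icc 0 1) {j : ℕ} (hj : j < m) (t : ℝ) :
    ∑ T ∈ powersetCard j univ, exp (t / (m - j) * deviation z T)
      ≤ m.choose j * exp (t ^ 2 / 8 * ∑ i ∈ range j, 1 / ((m : ℝ) - (i + 1)) ^ 2) := by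
  induction j with
  | zero => simp [deviation]
  | succ j ih =>
    have h_pos : (0 : ℝ) < m - (j + 1) := by rw [sub_pos]; exact_mod_cast hj
    have h_choose : ((m : ℝ) - j) * m.choose j = (j + 1) * m.choose (j + 1) := by
      rw [← Nat.cast_sub (by omega)]
      exact_mod_cast (by rw [mul_comm, ← Nat.choose_succ_right_eq, mul_comm] :
        (m - j) * m.choose j = (j + 1) * m.choose (j + 1))
    have h_step := succ_mul_sum_exp_deviation_le hz (j.lt_succ_self.trans hj) (t / (m - (j + 1)))
    rw [show t / (m - (j + 1)) * (m - j - 1) / (m - j) = t / (m - j) by field_simp; ring] at h_step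
    push_cast
    refine le_of_mul_le_mul_left ?_ (by positivity : (0 : ℝ) < j + 1)
    calc ((j : ℝ) + 1) * ∑ T ∈ powersetCard (j + 1) univ, exp (t / (m - (j + 1)) * deviation z T)
        ≤ (m - j) * exp ((t / (m - (j + 1))) ^ 2 / 8) *
            ∑ T ∈ powersetCard j univ, exp (t / (m - j) * deviation z T) := h_step
      _ ≤ (m - j) * exp ((t / (m - (j + 1))) ^ 2 / 8) *
            (m.choose j * exp (t ^ 2 / 8 * ∑ i ∈ range j, 1 / ((m : ℝ) - (i + 1)) ^ 2)) := by
          gcongr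
          · exact mul_nonneg (by linarith) (exp_pos _).le
          · exact ih (by omega)
      _ = (j + 1) * (m.choose (j + 1) *
            exp (t ^ 2 / 8 * ∑ i ∈ range (j + 1), 1 / ((m : ℝ) - (i + 1)) ^ 2)) := by
          rw [sum_range_succ, mul_add, exp_add, ← mul_assoc _ (m.choose (j + 1) : ℝ), ← h_choose,
            div_pow, ← mul_one_div (t ^ 2), mul_div_right_comm]
          ring

theorem sum_exp_mul_deviation_le (hz : ∀ i, z i ∈ Set.Icc 0 1) {k : ℕ} (hkm : k ≤ m) (τ : ℝ) :
    ∑ T ∈ powersetCard k univ, exp (τ * deviation z T)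
      ≤ m.choose k * exp (τ ^ 2 * (k * (m - k + 1) / m) / 8) := by
  rcases hkm.eq_or_lt with rfl | hkm
  · have h_univ : powersetCard k (univ : Finset (Fin k)) = {univ} := by
      simpa using powersetCard_self (univ : Finset (Fin k))
    rw [h_univ, sum_singleton, deviation_univ, mul_zero, exp_zero, Nat.choose_self, Nat.cast_one,
      one_mul, sub_self, zero_add, mul_one]
    exact one_le_exp (by positivity)
  have h_pos : (0 : ℝ) < m - k := by rw [sub_pos]; exact_mod_cast hkm
  calc ∑ T ∈ powersetCard k univ, exp (τ * deviation z T)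
      = ∑ T ∈ powersetCard k univ, exp (τ * (m - k) / (m - k) * deviation z T) := by
        rw [mul_div_cancel_right₀ _ h_pos.ne']
    _ ≤ m.choose k * exp ((τ * (m - k)) ^ 2 / 8 * ∑ i ∈ range k, 1 / ((m : ℝ) - (i + 1)) ^ 2) :=
        sum_exp_div_mul_deviation_le hz hkm _
    _ ≤ m.choose k * exp (τ ^ 2 * (k * (m - k + 1) / m) / 8) := by
        refine mul_le_mul_of_nonneg_left (exp_le_exp.2 ?_) (Nat.cast_nonneg _)
        rw [mul_pow, mul_div_right_comm, mul_assoc, mul_div_right_comm (τ ^ 2)]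
        exact mul_le_mul_of_nonneg_left (sq_mul_sum_inv_sq_le hkm) (by positivity)

theorem card_filter_le_deviation_le (hz : ∀ i, z i ∈ Set.Icc 0 1) {k : ℕ} (hk : 0 < k) (hkm : k ≤ m)
    {lam : ℝ} (hlam : 0 ≤ lam) :
    (#{T ∈ powersetCard k univ | k * lam ≤ deviation z T} : ℝ)
      ≤ m.choose k * exp (-(2 * m * k * lam ^ 2) / (m - k + 1)) := by
  have hm : (0 : ℝ) < m := by exact_mod_cast hk.trans_le hkm
  have hmk : (0 : ℝ) < m - k + 1 := by linarith [(Nat.cast_le (α := ℝ)).2 hkm]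
  -- the Chernoff parameter minimising `-τ k λ + τ² k (m - k + 1) / (8 m)`
  set τ := 4 * lam * m / (m - k + 1) with hτ
  calc (#{T ∈ powersetCard k univ | k * lam ≤ deviation z T} : ℝ)
      ≤ exp (-(τ * (k * lam))) * ∑ T ∈ powersetCard k univ, exp (τ * deviation z T) :=
        card_filter_le_exp_mul_sum_exp _ _ _ (by positivity)
    _ ≤ exp (-(τ * (k * lam))) * (m.choose k * exp (τ ^ 2 * (k * (m - k + 1) / m) / 8)) := by
        gcongr
        exact sum_exp_mul_deviation_le hz hkm τ
    _ = m.choose k * exp (-(2 * m * k * lam ^ 2) / (m - k + 1)) := by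
        rw [mul_left_comm, ← exp_add, hτ]
        congr 2
        field_simp
        ring

end Serfling

/-- Serfling's upper-tail bound for sampling without replacement from a binary
population: `Pr[X̄_k - μ ≥ λ] ≤ exp(-2kλ²/(1-(k-1)/m))`, and in particular
`Pr[X̄_k - μ ≥ λ] ≤ exp(-2mkλ²/(m-k+1))`. -/
theorem serfling_upper_tail (m k : ℕ) (hk : 0 < k) (hkm : k ≤ m)
    (z : Fin m → ℝ) (hz : ∀ i, z i = 0 ∨ z i = 1) (lam : ℝ) (hlam : 0 < lam) :
    (((Finset.univ.powersetCard k : Finset (Finset (Fin m))).filter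
          (fun s => lam ≤ (∑ i ∈ s, z i) / k - (∑ i, z i) / m)).card : ℝ) /
        ((Finset.univ.powersetCard k : Finset (Finset (Fin m))).card : ℝ)
      ≤ Real.exp (-(2 * k * lam ^ 2) / (1 - ((k : ℝ) - 1) / m)) ∧
    (((Finset.univ.powersetCard k : Finset (Finset (Fin m))).filter
          (fun s => lam ≤ (∑ i ∈ s, z i) / k - (∑ i, z i) / m)).card : ℝ) /
        ((Finset.univ.powersetCard k : Finset (Finset (Fin m))).card : ℝ)
      ≤ Real.exp (-(2 * m * k * lam ^ 2) / ((m : ℝ) - (k : ℝ) + 1)) := by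
  have hk' : (0 : ℝ) < k := by exact_mod_cast hk
  have h_event : (powersetCard k univ).filter
      (fun s => lam ≤ (∑ i ∈ s, z i) / k - (∑ i, z i) / m)
      = (powersetCard k univ).filter (fun s => k * lam ≤ Serfling.deviation z s) := by
    refine filter_congr fun T hT => ?_
    rw [mem_powersetCard_univ] at hT
    rw [Serfling.deviation, hT, ← le_div_iff₀' hk', sub_div, mul_div_cancel_left₀ _ hk'.ne']
  have h_Icc (i : Fin m) : z i ∈ Set.Icc 0 1 := by rcases hz i with h | h <;> simp [h]
  have h_tail : (#{T ∈ powersetCard k univ | lam ≤ (∑ i ∈ T, z i) / k - (∑ i, z i) / m} : ℝ)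
      / #(powersetCard k (univ : Finset (Fin m)))
      ≤ exp (-(2 * m * k * lam ^ 2) / (m - k + 1)) := by
    rw [h_event, card_powersetCard, card_univ, Fintype.card_fin,
      div_le_iff₀ (by exact_mod_cast Nat.choose_pos hkm), mul_comm (exp _)]
    exact Serfling.card_filter_le_deviation_le h_Icc hk hkm hlam.le
  have hm : (0 : ℝ) < m := by exact_mod_cast hk.trans_le hkm
  have h_denom : 1 - ((k : ℝ) - 1) / m = (m - k + 1) / m := by field_simp; ring
  refine ⟨?_, h_tail⟩
  rw [h_denom, div_div_eq_mul_div]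
  convert h_tail using 3
  ring
end
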